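/- Suppose the noise values {L_h}_{h∈H} are independent real-valued random variables with E[L_h] = 0 and Var(L_h) = 8 d² / ε² for every h (the equal-split allocation ε_ℓ = ε/d with ε > 0), and let D be a random district (a random subset of the leaves H_d) that is independent of the family {L_h}. Then the district error E_D (a random variable through both D and the L_h) satisfies E[E_D | D] = 0 almost surely and Var(E_D) = (8 d² / ε²) · (E[Frag(D)] + E[w_root(D)²]), where w_root(D) denotes the root weight associated to D. -/

import Mathlib

open Finset MeasureTheory ProbabilityTheory

structure Hierarchy where
  Node : Type
  fintypeNode : Fintype Node
  decEqNode : DecidableEq Node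
  d : ℕ
  d_pos : 1 ≤ d
  root : Node
  level : Node → ℕ
  parent : Node → Node
  level_pos : ∀ h, 1 ≤ level h
  level_le : ∀ h, level h ≤ d
  level_root : level root = 1
  root_unique : ∀ h, level h = 1 → h = root
  parent_level : ∀ h, h ≠ root → level (parent h) + 1 = level h
  child_exists : ∀ h, level h < d → ∃ c, c ≠ root ∧ parent c = h

attribute [instance] Hierarchy.fintypeNode Hierarchy.decEqNode

namespace Hierarchy

variable (H : Hierarchy)

def children (h : H.Node) : Finset H.Node :=
  Finset.univ.filter fun c => c ≠ H.root ∧ H.parent c = h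

def levelSet (ℓ : ℕ) : Finset H.Node :=
  Finset.univ.filter fun h => H.level h = ℓ

def leaves : Finset H.Node := H.levelSet H.d

def Consistent (a : H.Node → ℝ) : Prop :=
  ∀ h, H.level h < H.d → a h = ∑ c ∈ H.children h, a c

def IsToyDown (a L α : H.Node → ℝ) : Prop :=
  α H.root = a H.root + L H.root ∧
  ∀ h, H.level h < H.d →
    (∑ c ∈ H.children h, α c) = α h ∧
    ∀ x : H.Node → ℝ, (∑ c ∈ H.children h, x c) = α h →
      (∃ c ∈ H.children h, x c ≠ α c) →
      ∑ c ∈ H.children h, (α c - (a c + L c))^2 <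
        ∑ c ∈ H.children h, (x c - (a c + L c))^2

def IsWeights (D : Finset H.Node) (w : H.Node → ℝ) : Prop :=
  (∀ h, H.level h = H.d → w h = if h ∈ D then 1 else 0) ∧
  (∀ h, H.level h < H.d → w h = (∑ c ∈ H.children h, w c) / ((H.children h).card : ℝ))

def frag (w : H.Node → ℝ) : ℝ :=
  ∑ h ∈ Finset.univ.filter (fun h => h ≠ H.root), (w h - w (H.parent h))^2

end Hierarchy

/-!
The least-squares step of ToyDown shifts all children of `h` by the same amount, so each child
`c` gets the error `E_c = L_c + (E_h - ∑ L_{c'}) / n(h)` and `∑_c w_c E_c = ∑_c (w_c - w_h) L_c + w_h E_h`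
because `∑_c w_c = n(h) w_h`. Summing these identities over all inner nodes telescopes to
`E_D = ∑_h (w_h - w_ĥ) L_h` (with `w_ĥ := 0` at the root). The weights are determined by `D`,
which is independent of the centred, pairwise independent noises, so every product
`k(D) L_h` and every `k(D) L_h L_{h'}` with `h ≠ h'` has mean zero. This gives `E[E_D | D] = 0`
and `Var(E_D) = E[∑_h Var(L_h) (w_h - w_ĥ)²] = (8d²/ε²) E[Frag(D) + w_root²]`.
-/

/-- Pythagoras: `b + t` is the orthogonal projection of `b` onto the hyperplane
`∑ y = ∑ (b + t)`, which contains `x`. -/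
lemma Finset.sum_sq_sub_eq_of_sum_eq_sum_add {ι : Type*} {s : Finset ι} {x b : ι → ℝ} {t : ℝ}
    (hx : ∑ i ∈ s, x i = ∑ i ∈ s, (b i + t)) :
    ∑ i ∈ s, (x i - b i) ^ 2 = ∑ i ∈ s, (x i - (b i + t)) ^ 2 + #s * t ^ 2 := by
  have h0 : ∑ i ∈ s, (x i - (b i + t)) = 0 := by rw [sum_sub_distrib, hx, sub_self]
  calc ∑ i ∈ s, (x i - b i) ^ 2
      = ∑ i ∈ s, ((x i - (b i + t)) ^ 2 + 2 * t * (x i - (b i + t)) + t ^ 2) :=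
        sum_congr rfl fun i _ => by ring
    _ = _ := by
        rw [sum_add_distrib, sum_add_distrib, ← mul_sum, h0, sum_const, nsmul_eq_mul]
        ring

namespace Hierarchy

variable {H : Hierarchy}

lemma mem_children {c h : H.Node} : c ∈ H.children h ↔ c ≠ H.root ∧ H.parent c = h := by
  simp [children]

lemma level_of_mem_children {c h : H.Node} (hc : c ∈ H.children h) :
    H.level c = H.level h + 1 := by
  obtain ⟨hroot, rfl⟩ := mem_children.1 hc
  exact (H.parent_level c hroot).symm

lemma children_nonempty {h : H.Node} (hh : H.level h < H.d) : (H.children h).Nonempty := by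
  obtain ⟨c, hc⟩ := H.child_exists h hh
  exact ⟨c, mem_children.2 hc⟩

lemma children_eq_empty {h : H.Node} (hh : H.level h = H.d) : H.children h = ∅ :=
  eq_empty_of_forall_notMem fun c hc => by
    have := H.level_le c
    have := level_of_mem_children hc
    omega

lemma sum_sum_children {M : Type*} [AddCommMonoid M] (f : H.Node → M) :
    ∑ h, ∑ c ∈ H.children h, f c = ∑ c ∈ univ.filter (· ≠ H.root), f c := by
  rw [← sum_fiberwise (univ.filter (· ≠ H.root)) H.parent f]
  refine sum_congr rfl fun h _ => sum_congr ?_ fun _ _ => rfl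
  ext c
  simp [children]

lemma sum_eq_add_sum_ne_root {M : Type*} [AddCommMonoid M] (f : H.Node → M) :
    ∑ h, f h = f H.root + ∑ h ∈ univ.filter (· ≠ H.root), f h := by
  rw [filter_ne', add_sum_erase _ _ (mem_univ _)]

lemma sum_eq_sum_ite_level_lt_add_sum_leaves {M : Type*} [AddCommMonoid M] (f : H.Node → M) :
    ∑ h, f h = ∑ h, (if H.level h < H.d then f h else 0) + ∑ h ∈ H.leaves, f h := by
  rw [leaves, levelSet, sum_filter, ← sum_add_distrib]
  refine sum_congr rfl fun h _ => ?_
  rcases (H.level_le h).lt_or_eq with hh | hh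
  · simp [hh, hh.ne]
  · simp [hh]

theorem IsWeights.apply_eq {S : Finset H.Node} {W W' : H.Node → ℝ} (hW : H.IsWeights S W)
    (hW' : H.IsWeights S W') (h : H.Node) : W h = W' h := by
  rcases (H.level_le h).eq_or_lt with hh | hh
  · rw [hW.1 h hh, hW'.1 h hh]
  · rw [hW.2 h hh, hW'.2 h hh, sum_congr rfl fun c _ => hW.apply_eq hW' c]
termination_by H.d - H.level h
decreasing_by
  have := H.level_le c
  have := level_of_mem_children ‹c ∈ H.children h›
  omega

lemma IsWeights.sum_leaves_mul {S : Finset H.Node} {W : H.Node → ℝ} (hW : H.IsWeights S W)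
    (hS : S ⊆ H.leaves) (f : H.Node → ℝ) : ∑ h ∈ H.leaves, W h * f h = ∑ h ∈ S, f h := by
  have hleaf : ∀ h ∈ H.leaves, W h * f h = if h ∈ S then f h else 0 := fun h hh => by
    rw [hW.1 h (by simpa [leaves, levelSet] using hh)]
    split_ifs <;> simp
  rw [sum_congr rfl hleaf, sum_ite_mem, inter_eq_right.2 hS]

/-- `w h - w ĥ`, with weight `0` standing for the missing parent of the root. -/
def weightJump (W : H.Node → ℝ) (h : H.Node) : ℝ :=
  if h = H.root then W h else W h - W (H.parent h)

lemma sum_weightJump_mul (W f : H.Node → ℝ) :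
    ∑ h, H.weightJump W h * f h =
      W H.root * f H.root + ∑ h ∈ univ.filter (· ≠ H.root), (W h - W (H.parent h)) * f h := by
  rw [sum_eq_add_sum_ne_root]
  refine congrArg₂ _ (by simp [weightJump]) (sum_congr rfl fun h hh => ?_)
  rw [weightJump, if_neg (mem_filter.1 hh).2]

lemma sum_weightJump_sq (W : H.Node → ℝ) :
    ∑ h, H.weightJump W h ^ 2 = H.frag W + W H.root ^ 2 := by
  rw [sum_eq_add_sum_ne_root, add_comm, frag]
  refine congrArg₂ _ (sum_congr rfl fun h hh => ?_) (by simp [weightJump])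
  rw [weightJump, if_neg (mem_filter.1 hh).2]

variable {a L α : H.Node → ℝ}

lemma IsToyDown.apply_child (ht : H.IsToyDown a L α) {h c : H.Node} (hh : H.level h < H.d)
    (hc : c ∈ H.children h) :
    α c = a c + L c + (α h - ∑ c' ∈ H.children h, (a c' + L c')) / #(H.children h) := by
  set t := (α h - ∑ c' ∈ H.children h, (a c' + L c')) / #(H.children h)
  have hcard : (#(H.children h) : ℝ) ≠ 0 := by
    exact_mod_cast (children_nonempty hh).card_ne_zero
  have hsum : ∑ c' ∈ H.children h, (a c' + L c' + t) = α h := by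
    rw [sum_add_distrib, sum_const, nsmul_eq_mul]
    simp only [t]
    field_simp
    ring
  by_contra hne
  have hlt := (ht.2 h hh).2 (fun c' => a c' + L c' + t) hsum ⟨c, hc, Ne.symm hne⟩
  have hpyth := sum_sq_sub_eq_of_sum_eq_sum_add ((ht.2 h hh).1.trans hsum.symm)
  have hnonneg : 0 ≤ ∑ c' ∈ H.children h, (α c' - (a c' + L c' + t)) ^ 2 :=
    sum_nonneg fun _ _ => sq_nonneg _
  simp only [add_sub_cancel_left, sum_const, nsmul_eq_mul] at hlt
  linarith

lemma IsToyDown.sub_child (ht : H.IsToyDown a L α) (hcons : H.Consistent a) {h c : H.Node}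
    (hh : H.level h < H.d) (hc : c ∈ H.children h) :
    α c - a c = L c + (α h - a h - ∑ c' ∈ H.children h, L c') / #(H.children h) := by
  rw [ht.apply_child hh hc, sum_add_distrib, ← hcons h hh]
  ring

lemma IsToyDown.sum_children_mul_sub (ht : H.IsToyDown a L α) (hcons : H.Consistent a)
    {S : Finset H.Node} {W : H.Node → ℝ} (hW : H.IsWeights S W) (h : H.Node) :
    ∑ c ∈ H.children h, W c * (α c - a c) =
      ∑ c ∈ H.children h, (W c - W (H.parent c)) * L c +
        if H.level h < H.d then W h * (α h - a h) else 0 := by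
  rcases (H.level_le h).eq_or_lt with hh | hh
  · simp [children_eq_empty hh, hh]
  have hcard : (#(H.children h) : ℝ) ≠ 0 := by
    exact_mod_cast (children_nonempty hh).card_ne_zero
  have hWsum : ∑ c ∈ H.children h, W c = #(H.children h) * W h := by
    rw [hW.2 h hh]
    field_simp
  have herr : ∑ c ∈ H.children h, W c * (α c - a c) = ∑ c ∈ H.children h,
      W c * (L c + (α h - a h - ∑ c' ∈ H.children h, L c') / #(H.children h)) :=
    sum_congr rfl fun c hc => by rw [ht.sub_child hcons hh hc]
  have hparent : ∑ c ∈ H.children h, (W c - W (H.parent c)) * L c =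
      ∑ c ∈ H.children h, (W c - W h) * L c :=
    sum_congr rfl fun c hc => by rw [(mem_children.1 hc).2]
  rw [if_pos hh, herr, hparent]
  simp only [mul_add, sub_mul, sum_add_distrib, sum_sub_distrib, ← sum_mul, ← mul_sum, hWsum]
  field_simp
  ring

theorem IsToyDown.sum_sub_eq_sum_weightJump_mul (ht : H.IsToyDown a L α)
    (hcons : H.Consistent a) {S : Finset H.Node} (hS : S ⊆ H.leaves) {W : H.Node → ℝ}
    (hW : H.IsWeights S W) :
    ∑ h ∈ S, (α h - a h) = ∑ h, H.weightJump W h * L h := by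
  have htelescope := Fintype.sum_congr _ _ (ht.sum_children_mul_sub hcons hW)
  simp only [sum_add_distrib, sum_sum_children] at htelescope
  have hall := sum_eq_sum_ite_level_lt_add_sum_leaves fun h => W h * (α h - a h)
  rw [sum_eq_add_sum_ne_root, hW.sum_leaves_mul hS] at hall
  have hroot : α H.root - a H.root = L H.root := by rw [ht.1]; ring
  rw [sum_weightJump_mul, ← hroot]
  linarith

end Hierarchy

section RandomCoefficients

variable {Ω S ι : Type*} [MeasurableSpace Ω] {μ : Measure Ω}
  [mS : MeasurableSpace S] [DiscreteMeasurableSpace S] [Fintype ι]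
  {D : Ω → S} {L : ι → Ω → ℝ}

lemma integrable_comp_mul [Finite S] (hD : Measurable D) (k : S → ℝ) {f : Ω → ℝ}
    (hf : Integrable f μ) : Integrable (fun ω => k (D ω) * f ω) μ := by
  obtain ⟨C, hC⟩ := (Set.finite_range fun s => ‖k s‖).bddAbove
  exact hf.bdd_mul (Measurable.of_discrete.comp hD).aestronglyMeasurable
    (ae_of_all _ fun ω => hC ⟨D ω, rfl⟩)

lemma integrable_comp [Finite S] [IsFiniteMeasure μ] (hD : Measurable D) (k : S → ℝ) :
    Integrable (fun ω => k (D ω)) μ := by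
  simpa using integrable_comp_mul hD k (integrable_const (1 : ℝ))

lemma integrable_sum_comp_mul [Finite S] [IsFiniteMeasure μ] (hD : Measurable D)
    (hL : ∀ i, MemLp (L i) 2 μ) (g : S → ι → ℝ) : Integrable (fun ω => ∑ i, g (D ω) i * L i ω) μ :=
  integrable_finsetSum _ fun i _ => integrable_comp_mul hD (g · i) ((hL i).integrable one_le_two)

variable (hD : Measurable D) (hL : ∀ i, MemLp (L i) 2 μ)
  (hind : IndepFun D (fun ω i => L i ω) μ) (hmean : ∀ i, ∫ ω, L i ω ∂μ = 0)
include hD hL hind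

lemma integral_comp_mul_eq_mul_integral (k : S → ℝ) {φ : (ι → ℝ) → ℝ} (hφ : Measurable φ) :
    ∫ ω, k (D ω) * φ (fun i => L i ω) ∂μ = (∫ ω, k (D ω) ∂μ) * ∫ ω, φ (fun i => L i ω) ∂μ :=
  (hind.comp Measurable.of_discrete hφ).integral_fun_mul_eq_mul_integral
    (Measurable.of_discrete.comp hD).aestronglyMeasurable
    (hφ.comp_aemeasurable
      (aemeasurable_pi_lambda _ fun i => (hL i).aemeasurable)).aestronglyMeasurable

include hmean

lemma integral_comp_mul_eq_zero (k : S → ℝ) (i : ι) : ∫ ω, k (D ω) * L i ω ∂μ = 0 := by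
  rw [integral_comp_mul_eq_mul_integral hD hL hind k (measurable_pi_apply i), hmean, mul_zero]

lemma integral_comp_mul_mul_eq_zero (k : S → ℝ) {i j : ι} (hij : IndepFun (L i) (L j) μ) :
    ∫ ω, k (D ω) * (L i ω * L j ω) ∂μ = 0 := by
  rw [integral_comp_mul_eq_mul_integral hD hL hind k (φ := fun v => v i * v j) (by fun_prop),
    hij.integral_fun_mul_eq_mul_integral (hL i).1 (hL j).1, hmean, zero_mul, mul_zero]

lemma integral_comp_mul_sq (k : S → ℝ) (i : ι) :
    ∫ ω, k (D ω) * L i ω ^ 2 ∂μ = (∫ ω, k (D ω) ∂μ) * variance (L i) μ := by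
  rw [integral_comp_mul_eq_mul_integral hD hL hind k ((measurable_pi_apply i).pow_const 2),
    variance_of_integral_eq_zero (hL i).aemeasurable (hmean i)]

variable [Finite S] [IsFiniteMeasure μ] (g : S → ι → ℝ)

lemma integral_comp_mul_sum_eq_zero (k : S → ℝ) :
    ∫ ω, k (D ω) * ∑ i, g (D ω) i * L i ω ∂μ = 0 := by
  simp_rw [mul_sum, ← mul_assoc]
  rw [integral_finsetSum _ fun i _ =>
    integrable_comp_mul hD (fun s => k s * g s i) ((hL i).integrable one_le_two)]
  exact sum_eq_zero fun i _ => integral_comp_mul_eq_zero hD hL hind hmean (fun s => k s * g s i) i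

lemma condExp_sum_comp_mul_ae_eq_zero :
    μ[fun ω => ∑ i, g (D ω) i * L i ω | mS.comap D] =ᵐ[μ] 0 := by
  refine (ae_eq_condExp_of_forall_setIntegral_eq (g := 0) hD.comap_le
    (integrable_sum_comp_mul hD hL g) (fun _ _ _ => integrableOn_zero) ?_
    aestronglyMeasurable_const).symm
  rintro _ ⟨t, -, rfl⟩ -
  rw [← integral_indicator (f := fun ω => ∑ i, g (D ω) i * L i ω)
    (hD.comap_le _ ⟨t, .of_discrete, rfl⟩)]
  have hindicator : (D ⁻¹' t).indicator (fun ω => ∑ i, g (D ω) i * L i ω) =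
      fun ω => t.indicator 1 (D ω) * ∑ i, g (D ω) i * L i ω := by
    ext ω
    by_cases hω : D ω ∈ t <;> simp [hω]
  rw [hindicator, integral_comp_mul_sum_eq_zero hD hL hind hmean g]
  simp

lemma variance_sum_comp_mul (hpair : Pairwise fun i j => IndepFun (L i) (L j) μ) :
    variance (fun ω => ∑ i, g (D ω) i * L i ω) μ =
      ∫ ω, ∑ i, variance (L i) μ * g (D ω) i ^ 2 ∂μ := by
  have hX0 : ∫ ω, ∑ i, g (D ω) i * L i ω ∂μ = 0 := by
    simpa using integral_comp_mul_sum_eq_zero hD hL hind hmean g 1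
  have hLL : ∀ i j, Integrable (fun ω => g (D ω) i * g (D ω) j * (L i ω * L j ω)) μ :=
    fun i j => integrable_comp_mul hD (fun s => g s i * g s j) ((hL i).integrable_mul (hL j))
  rw [variance_of_integral_eq_zero (integrable_sum_comp_mul hD hL g).aemeasurable hX0,
    integral_finsetSum _ fun i _ => (integrable_comp hD (g · i ^ 2)).const_mul _]
  calc ∫ ω, (∑ i, g (D ω) i * L i ω) ^ 2 ∂μ
      = ∫ ω, ∑ i, ∑ j, g (D ω) i * g (D ω) j * (L i ω * L j ω) ∂μ := by
        congr 1
        ext ω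
        rw [sq, sum_mul_sum]
        exact sum_congr rfl fun i _ => sum_congr rfl fun j _ => by ring
    _ = ∑ i, ∑ j, ∫ ω, g (D ω) i * g (D ω) j * (L i ω * L j ω) ∂μ := by
        rw [integral_finsetSum _ fun i _ => integrable_finsetSum _ fun j _ => hLL i j]
        exact sum_congr rfl fun i _ => integral_finsetSum _ fun j _ => hLL i j
    _ = ∑ i, ∫ ω, variance (L i) μ * g (D ω) i ^ 2 ∂μ := sum_congr rfl fun i _ => by
        have hcross : ∀ j, j ≠ i → ∫ ω, g (D ω) i * g (D ω) j * (L i ω * L j ω) ∂μ = 0 :=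
          fun j hji => integral_comp_mul_mul_eq_zero hD hL hind hmean (fun s => g s i * g s j)
            (hpair hji.symm)
        have hdiag := integral_comp_mul_sq hD hL hind hmean (fun s => g s i ^ 2) i
        beta_reduce at hdiag
        rw [sum_eq_single i (fun j _ => hcross j) (by simp), integral_const_mul, mul_comm,
          ← hdiag]
        simp only [sq]

end RandomCoefficients

theorem toydown_variance_random_district_general (H : Hierarchy)
    {Ω : Type} [MeasurableSpace Ω] (μ : MeasureTheory.Measure Ω)
    [MeasureTheory.IsProbabilityMeasure μ]
    (ε : ℝ)
    (a : H.Node → ℝ) (hcons : H.Consistent a)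
    (L : H.Node → Ω → ℝ)
    (hL2 : ∀ h, MeasureTheory.MemLp (L h) 2 μ)
    (hindep : iIndepFun L μ)
    (hmean : ∀ h, ∫ ω, L h ω ∂μ = 0)
    (hvar : ∀ h, variance (L h) μ = 8 * (H.d : ℝ) ^ 2 / ε ^ 2)
    (α : H.Node → Ω → ℝ)
    (hα : ∀ ω, H.IsToyDown a (fun h => L h ω) (fun h => α h ω))
    (D : Ω → Finset H.Node) (hD : ∀ ω, D ω ⊆ H.leaves)
    (hDmeas : @Measurable Ω (Finset H.Node) _ ⊤ D)
    (hDindep : @IndepFun Ω (Finset H.Node) (H.Node → ℝ) _ ⊤ _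
      D (fun ω h => L h ω) μ)
    (w : Ω → H.Node → ℝ) (hw : ∀ ω, H.IsWeights (D ω) (w ω)) :
    (μ[(fun ω => ∑ h ∈ D ω, (α h ω - a h)) | MeasurableSpace.comap D ⊤]
        =ᵐ[μ] fun _ => 0) ∧
      variance (fun ω => ∑ h ∈ D ω, (α h ω - a h)) μ =
        (8 * (H.d : ℝ) ^ 2 / ε ^ 2) *
          ((∫ ω, H.frag (w ω) ∂μ) + ∫ ω, (w ω H.root) ^ 2 ∂μ) := by
  obtain ⟨W, hwW⟩ : ∃ W : Finset H.Node → H.Node → ℝ, ∀ ω, w ω = W (D ω) :=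
    ⟨fun S => Classical.epsilon (H.IsWeights S),
      fun ω => funext ((hw ω).apply_eq (Classical.epsilon_spec ⟨_, hw ω⟩))⟩
  have herror : (fun ω => ∑ h ∈ D ω, (α h ω - a h)) =
      fun ω => ∑ h, H.weightJump (W (D ω)) h * L h ω :=
    funext fun ω => by
      rw [← hwW]
      exact (hα ω).sum_sub_eq_sum_weightJump_mul hcons (hD ω) (hw ω)
  have hpair : Pairwise fun h h' => IndepFun (L h) (L h') μ := fun _ _ => hindep.indepFun
  let : MeasurableSpace (Finset H.Node) := ⊤
  rw [herror]
  refine ⟨condExp_sum_comp_mul_ae_eq_zero hDmeas hL2 hDindep hmean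
    (fun S => H.weightJump (W S)), ?_⟩
  rw [variance_sum_comp_mul hDmeas hL2 hDindep hmean (fun S => H.weightJump (W S)) hpair]
  simp_rw [hvar, ← mul_sum, Hierarchy.sum_weightJump_sq, hwW]
  rw [integral_const_mul, integral_add (integrable_comp hDmeas (fun S => H.frag (W S)))
    (integrable_comp hDmeas (fun S => W S H.root ^ 2))]

/-- For a random district `D` independent of the noise, under the equal-split allocation:
`E[E_D | D] = 0` a.s., and `Var(E_D) = (8d²/ε²)·(E[Frag(D)] + E[w_root(D)²])`. -/
theorem toydown_variance_random_district (H : Hierarchy)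
    {Ω : Type} [MeasurableSpace Ω] (μ : MeasureTheory.Measure Ω)
    [MeasureTheory.IsProbabilityMeasure μ]
    (ε : ℝ) (hε : 0 < ε)
    (a : H.Node → ℝ) (hcons : H.Consistent a)
    (L : H.Node → Ω → ℝ)
    (hmeas : ∀ h, Measurable (L h))
    (hL2 : ∀ h, MeasureTheory.MemLp (L h) 2 μ)
    (hindep : iIndepFun L μ)
    (hmean : ∀ h, ∫ ω, L h ω ∂μ = 0)
    (hvar : ∀ h, variance (L h) μ = 8 * (H.d : ℝ) ^ 2 / ε ^ 2)
    (α : H.Node → Ω → ℝ)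
    (hα : ∀ ω, H.IsToyDown a (fun h => L h ω) (fun h => α h ω))
    (D : Ω → Finset H.Node) (hD : ∀ ω, D ω ⊆ H.leaves)
    (hDmeas : @Measurable Ω (Finset H.Node) _ ⊤ D)
    (hDindep : @IndepFun Ω (Finset H.Node) (H.Node → ℝ) _ ⊤ _
      D (fun ω h => L h ω) μ)
    (w : Ω → H.Node → ℝ) (hw : ∀ ω, H.IsWeights (D ω) (w ω)) :
    (μ[(fun ω => ∑ h ∈ D ω, (α h ω - a h)) | MeasurableSpace.comap D ⊤]
        =ᵐ[μ] fun _ => 0) ∧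
      variance (fun ω => ∑ h ∈ D ω, (α h ω - a h)) μ =
        (8 * (H.d : ℝ) ^ 2 / ε ^ 2) *
          ((∫ ω, H.frag (w ω) ∂μ) + ∫ ω, (w ω H.root) ^ 2 ∂μ) :=
  toydown_variance_random_district_general H μ ε a hcons L hL2 hindep hmean hvar α hα D hD hDmeas
    hDindep w hw
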